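/- arXiv:1103.2222 — 2 statements merged into one kernel-verified Lean document; each statement's English description precedes it below -/
import Mathlib

section
/- Let (σ_{n,1})_{n∈ℕ} and (σ_{n,2})_{n∈ℕ} be two sequences of strictly positive real numbers, and for i = 1, 2 let ν_i be the infinite product on ℝ^ℕ of the centered Gaussian measures N(0, σ_{n,i}²). If the series ∑_{n∈ℕ} (σ_{n,1}/σ_{n,2} − 1)² diverges (is not summable), then ν_1 and ν_2 are mutually singular: there exists a measurable set A ⊆ ℝ^ℕ with ν_1(A) = 1 and ν_2(A) = 0. -/
/-!
Test the coordinates against `gₙ(t) = exp(-t² / (2 σ_{n,2}²))`, whose mean under `N(0, σ²)` is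
`(1 + σ² / σ_{n,2}²)^(-1/2)`. Near ratio `1` the gap `Δₙ` between the two means is comparable to
`σ_{n,1}/σ_{n,2} - 1`, so `∑ Δₙ² = ∞`. The statistics `S_N = ∑_{n<N} Δₙ gₙ(xₙ)` have means differing
by `M_N = ∑_{n<N} Δₙ²` and variances at most `M_N` under both measures; along a subsequence with
`M_N ≥ 2^k`, Chebyshev and Borel–Cantelli put `S_N` eventually within `M_N / 2` of its mean almost
surely under each measure, so the two measures live on disjoint sets.
-/

open MeasureTheory ProbabilityTheory Filter Real

open scoped ENNReal NNReal

section Separation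

variable {Ω : Type*} [MeasurableSpace Ω] {μ ν : Measure Ω}

theorem ae_eventually_abs_sub_integral_lt [IsFiniteMeasure μ] {T : ℕ → Ω → ℝ} {ε : ℕ → ℝ}
    (hT : ∀ k, MemLp (T k) 2 μ) (hε : ∀ k, 0 < ε k)
    (hsum : Summable fun k => Var[T k; μ] / ε k ^ 2) :
    ∀ᵐ x ∂μ, ∀ᶠ k in atTop, |T k x - μ[T k]| < ε k := by
  have hdev : ∑' k, μ {x | ε k ≤ |T k x - μ[T k]|} ≠ ∞ := by
    refine ne_top_of_le_ne_top (ENNReal.ofReal_ne_top (r := ∑' k, Var[T k; μ] / ε k ^ 2)) ?_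
    rw [ENNReal.ofReal_tsum_of_nonneg
      (fun k => div_nonneg (variance_nonneg _ _) (sq_nonneg _)) hsum]
    exact ENNReal.tsum_le_tsum fun k => meas_ge_le_variance_div_sq (hT k) (hε k)
  filter_upwards [ae_eventually_notMem hdev] with x hx
  filter_upwards [hx] with k hk
  simpa using hk

theorem mutuallySingular_of_variance_le_integral_sub_integral [IsFiniteMeasure μ]
    [IsFiniteMeasure ν] {T : ℕ → Ω → ℝ} {m : ℕ → ℝ} (hTμ : ∀ k, MemLp (T k) 2 μ)
    (hTν : ∀ k, MemLp (T k) 2 ν)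
    (hgap : ∀ k, μ[T k] - ν[T k] = m k) (hvarμ : ∀ k, Var[T k; μ] ≤ m k)
    (hvarν : ∀ k, Var[T k; ν] ≤ m k) (hm : ∀ k, 0 < m k) (hsum : Summable fun k => (m k)⁻¹) :
    μ ⟂ₘ ν := by
  have hsum_var : ∀ ρ : Measure Ω, (∀ k, Var[T k; ρ] ≤ m k) →
      Summable fun k => Var[T k; ρ] / (m k / 2) ^ 2 := fun ρ hvar =>
    (hsum.mul_left 4).of_nonneg_of_le (fun k => div_nonneg (variance_nonneg _ _) (sq_nonneg _))
      fun k => calc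
        Var[T k; ρ] / (m k / 2) ^ 2 ≤ m k / (m k / 2) ^ 2 := by gcongr; exact hvar k
        _ = 4 * (m k)⁻¹ := by field_simp [(hm k).ne']; ring
  have hμ := ae_eventually_abs_sub_integral_lt hTμ (fun k => half_pos (hm k)) (hsum_var μ hvarμ)
  have hν := ae_eventually_abs_sub_integral_lt hTν (fun k => half_pos (hm k)) (hsum_var ν hvarν)
  refine Measure.mutuallySingular_iff_disjoint_ae.2 (Filter.disjoint_iff.2 ⟨_, hμ, _, hν, ?_⟩)
  refine Set.disjoint_left.2 fun x hxμ hxν => ?_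
  obtain ⟨k, hkμ, hkν⟩ := (hxμ.and hxν).exists
  linarith [hgap k, abs_lt.1 hkμ, abs_lt.1 hkν]

theorem variance_sum_smul_le [IsProbabilityMeasure μ] {ι : Type*} {f : ι → Ω → ℝ}
    (hf : ∀ i, Measurable (f i)) (hf01 : ∀ i x, f i x ∈ Set.Icc (0 : ℝ) 1)
    (hind : Pairwise fun i j => f i ⟂ᵢ[μ] f j) (c : ι → ℝ) (s : Finset ι) :
    Var[∑ i ∈ s, c i • f i; μ] ≤ ∑ i ∈ s, c i ^ 2 / 4 := by
  have hmem i : MemLp (c i • f i) 2 μ :=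
    (memLp_of_bounded (ae_of_all _ (hf01 i)) (hf i).aestronglyMeasurable 2).const_smul (c i)
  rw [IndepFun.variance_sum (fun i _ => hmem i) fun i _ j _ hij =>
    (hind hij).comp (measurable_const_smul (c i)) (measurable_const_smul (c j))]
  gcongr with i
  calc Var[c i • f i; μ] = c i ^ 2 * Var[f i; μ] := variance_smul _ _ _
    _ ≤ c i ^ 2 * ((1 - 0) / 2) ^ 2 := by
        gcongr
        exact variance_le_sq_of_bounded (ae_of_all _ (hf01 i)) (hf i).aemeasurable
    _ = c i ^ 2 / 4 := by ring

theorem mutuallySingular_of_not_summable_sq_integral_sub [IsProbabilityMeasure μ]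
    [IsProbabilityMeasure ν] {f : ℕ → Ω → ℝ} (hf : ∀ n, Measurable (f n))
    (hf01 : ∀ n x, f n x ∈ Set.Icc (0 : ℝ) 1) (hindμ : Pairwise fun i j => f i ⟂ᵢ[μ] f j)
    (hindν : Pairwise fun i j => f i ⟂ᵢ[ν] f j)
    (hdiv : ¬ Summable fun n => (μ[f n] - ν[f n]) ^ 2) :
    μ ⟂ₘ ν := by
  set Δ : ℕ → ℝ := fun n => μ[f n] - ν[f n]
  set M : ℕ → ℝ := fun N => ∑ n ∈ Finset.range N, Δ n ^ 2
  have hM : Tendsto M atTop atTop :=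
    (not_summable_iff_tendsto_nat_atTop_of_nonneg fun n => sq_nonneg (Δ n)).1 hdiv
  choose φ hφ using fun k : ℕ => (hM.eventually_ge_atTop (2 ^ k)).exists
  have hMpos : ∀ k, 0 < M (φ k) := fun k => (pow_pos two_pos k).trans_le (hφ k)
  have hmem : ∀ (ρ : Measure Ω) [IsFiniteMeasure ρ] n, MemLp (f n) 2 ρ := fun ρ _ n =>
    memLp_of_bounded (ae_of_all _ (hf01 n)) (hf n).aestronglyMeasurable 2
  have hvar : ∀ (ρ : Measure Ω) [IsProbabilityMeasure ρ], (Pairwise fun i j => f i ⟂ᵢ[ρ] f j) →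
      ∀ N, Var[∑ n ∈ Finset.range N, Δ n • f n; ρ] ≤ M N := fun ρ _ hind N =>
    (variance_sum_smul_le hf hf01 hind Δ _).trans
      (Finset.sum_le_sum fun n _ => by linarith [sq_nonneg (Δ n)])
  refine mutuallySingular_of_variance_le_integral_sub_integral (m := fun k => M (φ k))
    (fun k => memLp_finsetSum' _ fun n _ => (hmem μ n).const_smul (Δ n))
    (fun k => memLp_finsetSum' _ fun n _ => (hmem ν n).const_smul (Δ n))
    (fun k => ?_) (fun k => hvar μ hindμ _) (fun k => hvar ν hindν _) hMpos ?_
  · simp only [Finset.sum_apply, Pi.smul_apply, smul_eq_mul]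
    rw [integral_finsetSum _ fun n _ => ((hmem μ n).integrable one_le_two).const_mul (Δ n),
      integral_finsetSum _ fun n _ => ((hmem ν n).integrable one_le_two).const_mul (Δ n),
      ← Finset.sum_sub_distrib]
    refine Finset.sum_congr rfl fun n _ => ?_
    rw [integral_const_mul, integral_const_mul, ← mul_sub, sq]
  · refine summable_geometric_two.of_nonneg_of_le (fun k => (inv_pos.2 (hMpos k)).le)
      fun k => ?_
    rw [one_div, inv_pow]
    exact inv_anti₀ (pow_pos two_pos k) (hφ k)

end Separation

section InfiniteProduct

variable {X : ℕ → Type*} [∀ n, MeasurableSpace (X n)]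
  {μ ν : (n : ℕ) → Measure (X n)} [∀ n, IsProbabilityMeasure (μ n)]
  [∀ n, IsProbabilityMeasure (ν n)]

theorem integral_comp_eval_infinitePi {n : ℕ} {E : Type*} [NormedAddCommGroup E]
    [NormedSpace ℝ E] {g : X n → E} (hg : AEStronglyMeasurable g (μ n)) :
    ∫ x, g (x n) ∂Measure.infinitePi μ = ∫ t, g t ∂μ n := by
  rw [← Measure.infinitePi_map_eval μ n] at hg ⊢
  exact (integral_map (measurable_pi_apply n).aemeasurable hg).symm

theorem infinitePi_mutuallySingular_of_not_summable {g : (n : ℕ) → X n → ℝ}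
    (hg : ∀ n, Measurable (g n)) (hg01 : ∀ n x, g n x ∈ Set.Icc (0 : ℝ) 1)
    (hdiv : ¬ Summable fun n => (∫ t, g n t ∂μ n - ∫ t, g n t ∂ν n) ^ 2) :
    Measure.infinitePi μ ⟂ₘ Measure.infinitePi ν := by
  refine mutuallySingular_of_not_summable_sq_integral_sub (f := fun n x => g n (x n))
    (fun n => (hg n).comp (measurable_pi_apply n)) (fun n x => hg01 n (x n))
    (fun i j hij => (iIndepFun_infinitePi hg).indepFun hij)
    (fun i j hij => (iIndepFun_infinitePi hg).indepFun hij) ?_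
  simpa only [integral_comp_eval_infinitePi (hg _).aestronglyMeasurable] using hdiv

theorem eq_infinitePi_of_map_fin {ρ : Measure (∀ n, X n)}
    (hρ : ∀ N : ℕ, ρ.map (fun x (i : Fin N) => x i) = Measure.pi fun i : Fin N => μ i) :
    ρ = Measure.infinitePi μ := by
  classical
  refine Measure.eq_infinitePi μ fun s t ht => ?_
  obtain ⟨N, hsN⟩ := s.exists_nat_subset_range
  have hpre : Set.pi (↑s) t = (fun x (i : Fin N) => x i) ⁻¹'
      Set.univ.pi fun i : Fin N => if (i : ℕ) ∈ s then t i else Set.univ := by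
    ext x
    simp only [Set.mem_pi, Finset.mem_coe, Set.mem_preimage, Set.mem_univ, true_implies]
    refine ⟨fun h i => ?_, fun h i hi => ?_⟩
    · split_ifs with hi
      exacts [h i hi, trivial]
    · simpa [hi] using h ⟨i, Finset.mem_range.1 (hsN hi)⟩
  rw [hpre, ← Measure.map_apply (by fun_prop) (.univ_pi fun i => by split_ifs <;> simp [ht]),
    hρ, Measure.pi_pi]
  rw [Fin.prod_univ_eq_prod_range (fun n => μ n (if n ∈ s then t n else Set.univ))]
  simp only [apply_ite, measure_univ, Finset.prod_ite_mem, Finset.inter_eq_right.2 hsN]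

end InfiniteProduct

theorem integral_exp_neg_mul_sq_gaussianReal {v : ℝ≥0} {a : ℝ} (h : 0 < 1 + 2 * v * a) :
    ∫ x, exp (-(a * x ^ 2)) ∂gaussianReal 0 v = (√(1 + 2 * v * a))⁻¹ := by
  rcases eq_or_ne v 0 with rfl | hv
  · simp [gaussianReal_zero_var]
  have hv' : (0 : ℝ) < v := by positivity
  set b := (1 + 2 * v * a) / (2 * v)
  have hdensity : ∀ x : ℝ, gaussianPDFReal 0 v x • exp (-(a * x ^ 2))
      = (√(2 * π * v))⁻¹ * exp (-b * x ^ 2) := fun x => by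
    rw [gaussianPDFReal, smul_eq_mul, mul_assoc, ← exp_add]
    congr 2
    simp only [b]
    field_simp
    ring
  simp_rw [integral_gaussianReal_eq_integral_smul hv, hdensity]
  rw [integral_const_mul, integral_gaussian, ← sqrt_inv, ← sqrt_mul (by positivity), ← sqrt_inv]
  congr 1
  simp only [b]
  field_simp

theorem integral_exp_neg_sq_div_gaussianReal (σ : ℝ) {s : ℝ} (hs : s ≠ 0) :
    ∫ x, exp (-((2 * s ^ 2)⁻¹ * x ^ 2)) ∂gaussianReal 0 (σ ^ 2).toNNReal
      = (√(1 + (σ / s) ^ 2))⁻¹ := by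
  have hσ : ((σ ^ 2).toNNReal : ℝ) = σ ^ 2 := Real.coe_toNNReal _ (sq_nonneg σ)
  rw [integral_exp_neg_mul_sq_gaussianReal (by rw [hσ]; positivity), hσ]
  congr 2
  field_simp

theorem sq_sub_one_le_of_sq_inv_sqrt_sub_lt {r : ℝ} (hr : 0 ≤ r)
    (h : ((√(1 + r ^ 2))⁻¹ - (√2)⁻¹) ^ 2 < 1 / 8) :
    (r - 1) ^ 2 ≤ 36 * ((√(1 + r ^ 2))⁻¹ - (√2)⁻¹) ^ 2 := by
  set a := √(1 + r ^ 2)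
  set b := √2
  set Δ := a⁻¹ - b⁻¹
  have ha : 0 < a := by positivity
  have hb : 0 < b := by positivity
  have ha2 : a ^ 2 = 1 + r ^ 2 := sq_sqrt (by positivity)
  have hb2 : b ^ 2 = 2 := sq_sqrt (by norm_num)
  have hfactor : (r - 1) * (1 + r) = -(Δ * (a * b * (a + b))) := by
    simp only [Δ]
    field_simp
    linear_combination hb2 - ha2
  have ha_lt : a < 2 * b := by
    have hΔ : |Δ| < (2 * b)⁻¹ := by
      refine abs_lt_of_sq_lt_sq ?_ (by positivity)
      rw [inv_pow, mul_pow, hb2]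
      linarith
    have : (2 * b)⁻¹ < a⁻¹ := by
      have := (abs_lt.1 hΔ).1
      simp only [Δ] at this
      field_simp at this ⊢
      linarith
    exact (inv_lt_inv₀ (by linarith) ha).1 this
  have ha_le : a ≤ 1 + r := by
    rw [show a = √(1 + r ^ 2) from rfl, sqrt_le_left (by linarith)]
    nlinarith
  have hbound : a * b * (a + b) ≤ 6 * (1 + r) := calc
    a * b * (a + b) ≤ (1 + r) * b * (3 * b) := by gcongr; linarith
    _ = 6 * (1 + r) := by linear_combination 3 * (1 + r) * hb2
  have hpos : 0 < (1 + r) ^ 2 := by positivity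
  refine le_of_mul_le_mul_right ?_ hpos
  calc (r - 1) ^ 2 * (1 + r) ^ 2 = Δ ^ 2 * (a * b * (a + b)) ^ 2 := by
        rw [← mul_pow, hfactor]; ring
    _ ≤ Δ ^ 2 * (6 * (1 + r)) ^ 2 := by gcongr
    _ = 36 * Δ ^ 2 * (1 + r) ^ 2 := by ring

theorem summable_sq_sub_one_of_summable_sq_inv_sqrt_sub {r : ℕ → ℝ} (hr : ∀ n, 0 ≤ r n)
    (h : Summable fun n => ((√(1 + r n ^ 2))⁻¹ - (√2)⁻¹) ^ 2) :
    Summable fun n => (r n - 1) ^ 2 := by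
  refine (h.mul_left 36).of_norm_bounded_eventually_nat ?_
  filter_upwards [h.tendsto_atTop_zero.eventually_lt_const (by norm_num : (0 : ℝ) < 1 / 8)]
    with n hn
  rw [norm_of_nonneg (sq_nonneg _)]
  exact sq_sub_one_le_of_sq_inv_sqrt_sub_lt (hr n) hn

theorem gaussian_product_mutually_singular_general
    (σ1 σ2 : ℕ → ℝ) (hσ1 : ∀ n, 0 < σ1 n) (hσ2 : ∀ n, 0 < σ2 n)
    (ν1 ν2 : Measure (ℕ → ℝ))
    [IsProbabilityMeasure ν1]
    (hν1 : ∀ N : ℕ, Measure.map (fun x (i : Fin N) => x i) ν1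
      = Measure.pi (fun i : Fin N => gaussianReal 0 ((σ1 i ^ 2).toNNReal)))
    (hν2 : ∀ N : ℕ, Measure.map (fun x (i : Fin N) => x i) ν2
      = Measure.pi (fun i : Fin N => gaussianReal 0 ((σ2 i ^ 2).toNNReal)))
    (hdiv : ¬ Summable (fun n => (σ1 n / σ2 n - 1) ^ 2)) :
    ∃ A : Set (ℕ → ℝ), MeasurableSet A ∧ ν1 A = 1 ∧ ν2 A = 0 := by
  have hsing : ν2 ⟂ₘ ν1 := by
    rw [eq_infinitePi_of_map_fin (μ := fun n => gaussianReal 0 (σ1 n ^ 2).toNNReal) hν1,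
      eq_infinitePi_of_map_fin (μ := fun n => gaussianReal 0 (σ2 n ^ 2).toNNReal) hν2]
    refine (infinitePi_mutuallySingular_of_not_summable
      (g := fun n t => exp (-((2 * σ2 n ^ 2)⁻¹ * t ^ 2))) (fun n => by fun_prop)
      (fun n t => ⟨(exp_pos _).le, exp_le_one_iff.2 (neg_nonpos.2 (by positivity))⟩)
      fun hsum => hdiv ?_).symm
    refine summable_sq_sub_one_of_summable_sq_inv_sqrt_sub
      (fun n => (div_pos (hσ1 n) (hσ2 n)).le) ?_
    simpa only [integral_exp_neg_sq_div_gaussianReal _ (hσ2 _).ne', div_self (hσ2 _).ne',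
      one_pow, one_add_one_eq_two] using hsum
  exact ⟨hsing.nullSet, hsing.measurableSet_nullSet,
    (prob_compl_eq_zero_iff hsing.measurableSet_nullSet).1 hsing.measure_compl_nullSet,
    hsing.measure_nullSet⟩

/-- If `∑ (σ1 n / σ2 n - 1)^2` diverges, then the two infinite products of centered Gaussian
measures with variances `σ1 n ^ 2` and `σ2 n ^ 2` are mutually singular. -/
theorem gaussian_product_mutually_singular
    (σ1 σ2 : ℕ → ℝ) (hσ1 : ∀ n, 0 < σ1 n) (hσ2 : ∀ n, 0 < σ2 n)
    (ν1 ν2 : Measure (ℕ → ℝ))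
    [IsProbabilityMeasure ν1] [IsProbabilityMeasure ν2]
    (hν1 : ∀ N : ℕ, Measure.map (fun x (i : Fin N) => x i) ν1
      = Measure.pi (fun i : Fin N => gaussianReal 0 ((σ1 i ^ 2).toNNReal)))
    (hν2 : ∀ N : ℕ, Measure.map (fun x (i : Fin N) => x i) ν2
      = Measure.pi (fun i : Fin N => gaussianReal 0 ((σ2 i ^ 2).toNNReal)))
    (hdiv : ¬ Summable (fun n => (σ1 n / σ2 n - 1) ^ 2)) :
    ∃ A : Set (ℕ → ℝ), MeasurableSet A ∧ ν1 A = 1 ∧ ν2 A = 0 :=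
  gaussian_product_mutually_singular_general σ1 σ2 hσ1 hσ2 ν1 ν2 hν1 hν2 hdiv
end

section
/- Let (a_n)_{n∈ℕ} and (b_n)_{n∈ℕ} be sequences of strictly positive real numbers. Then the infinite product ∏_{n∈ℕ} √(2 a_n b_n / (a_n² + b_n²)) converges to a strictly positive limit (i.e. there exists L > 0 such that the finite partial products converge to L) if and only if the series ∑_{n∈ℕ} (a_n/b_n − 1)² converges. -/
/-!
Writing `r = a / b`, each factor is `√(1 - t)` with `t = (r - 1)² / (r² + 1) ∈ [0, 1)`. Since the
factors lie in `(0, 1]`, the partial products converge to a positive limit exactly when the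
nonpositive series `∑ log (1 - t)` converges, i.e. when `∑ t` does, because
`-log (1 - t)` is comparable to `t` for small `t`. Finally `t ≤ (r - 1)²`, and conversely
`(r - 1)² ≤ 6 t` once `t ≤ 1/4`, so `∑ t` and `∑ (r - 1)²` converge together.
-/

open Filter Topology Finset

theorem exists_pos_tendsto_prod_range_iff_summable_log {f : ℕ → ℝ} (hpos : ∀ n, 0 < f n)
    (hle : ∀ n, f n ≤ 1) :
    (∃ L > 0, Tendsto (fun N => ∏ n ∈ range N, f n) atTop (𝓝 L)) ↔
      Summable (fun n => Real.log (f n)) := by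
  constructor
  · rintro ⟨L, hL, hprod⟩
    have hsum : Tendsto (fun N => ∑ n ∈ range N, -Real.log (f n)) atTop (𝓝 (-Real.log L)) := by
      have := ((Real.continuousAt_log hL.ne').tendsto.comp hprod).neg
      simpa only [Function.comp_def, Real.log_prod fun n _ => (hpos n).ne',
        sum_neg_distrib] using this
    -- the terms `-log (f n)` are nonnegative, so convergence of the partial sums is summability
    have hnonneg : ∀ n, 0 ≤ -Real.log (f n) := fun n =>
      neg_nonneg.mpr (Real.log_nonpos (hpos n).le (hle n))
    simpa using ((hasSum_iff_tendsto_nat_of_nonneg hnonneg _).mpr hsum).summable.neg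
  · intro hlog
    exact ⟨_, Real.exp_pos _, (Real.hasProd_of_hasSum_log hpos hlog.hasSum).tendsto_prod_nat⟩

theorem summable_log_one_sub_iff {t : ℕ → ℝ} (h0 : ∀ n, 0 ≤ t n) (h1 : ∀ n, t n < 1) :
    Summable (fun n => Real.log (1 - t n)) ↔ Summable t := by
  refine ⟨fun hlog => hlog.neg.of_nonneg_of_le h0 fun n => ?_, fun ht => ?_⟩
  · linarith [Real.log_le_sub_one_of_pos (sub_pos.mpr (h1 n))]
  · simpa only [← sub_eq_add_neg] using Real.summable_log_one_add_of_summable ht.neg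

theorem sq_sub_one_le_six_mul_div_of_le_quarter {x : ℝ} (h : (x - 1) ^ 2 / (x ^ 2 + 1) ≤ 1 / 4) :
    (x - 1) ^ 2 ≤ 6 * ((x - 1) ^ 2 / (x ^ 2 + 1)) := by
  set t := (x - 1) ^ 2 / (x ^ 2 + 1)
  have ht : (x - 1) ^ 2 = t * (x ^ 2 + 1) := by
    unfold t; field_simp
  have : 0 ≤ t := by positivity
  -- `x ^ 2 + 1 ≤ 2 (x - 1) ^ 2 + 3`, so `(x - 1) ^ 2 ≤ t (2 (x - 1) ^ 2 + 3) ≤ (x - 1) ^ 2 / 2 + 3 t`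
  nlinarith [sq_nonneg (x - 2)]

theorem summable_sq_sub_one_div_iff {x : ℕ → ℝ} :
    Summable (fun n => (x n - 1) ^ 2 / (x n ^ 2 + 1)) ↔ Summable (fun n => (x n - 1) ^ 2) := by
  refine ⟨fun ht => ?_, fun hs => hs.of_nonneg_of_le (fun n => by positivity) fun n => ?_⟩
  · refine (ht.mul_left 6).of_norm_bounded_eventually ?_
    filter_upwards [ht.tendsto_cofinite_zero.eventually_le_const (by norm_num : (0:ℝ) < 1 / 4)]
      with n hn
    rw [Real.norm_of_nonneg (sq_nonneg _)]
    exact sq_sub_one_le_six_mul_div_of_le_quarter hn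
  · exact div_le_self (sq_nonneg _) (by nlinarith [sq_nonneg (x n)])

theorem two_mul_mul_div_sq_add_sq {a b : ℝ} (hb : b ≠ 0) :
    2 * a * b / (a ^ 2 + b ^ 2) = 1 - (a / b - 1) ^ 2 / ((a / b) ^ 2 + 1) := by
  have : 0 < b ^ 2 := by positivity
  field_simp
  ring

/-- The infinite product `∏ √(2 aₙ bₙ / (aₙ² + bₙ²))` converges to a strictly positive limit
if and only if `∑ (aₙ/bₙ - 1)²` converges. -/
theorem hellinger_product_pos_iff_summable
    (a b : ℕ → ℝ) (ha : ∀ n, 0 < a n) (hb : ∀ n, 0 < b n) :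
    (∃ L > (0 : ℝ), Tendsto (fun N => ∏ n ∈ Finset.range N,
        Real.sqrt (2 * a n * b n / ((a n) ^ 2 + (b n) ^ 2))) atTop (nhds L)) ↔
    Summable (fun n => (a n / b n - 1) ^ 2) := by
  set t : ℕ → ℝ := fun n => (a n / b n - 1) ^ 2 / ((a n / b n) ^ 2 + 1)
  have hfactor : ∀ n, 2 * a n * b n / (a n ^ 2 + b n ^ 2) = 1 - t n := fun n =>
    two_mul_mul_div_sq_add_sq (hb n).ne'
  have ht0 : ∀ n, 0 ≤ t n := fun n => by positivity
  have ht1 : ∀ n, t n < 1 := fun n => by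
    have := ha n
    have := hb n
    have : 0 < 2 * a n * b n / (a n ^ 2 + b n ^ 2) := by positivity
    linarith [hfactor n]
  simp only [hfactor]
  rw [exists_pos_tendsto_prod_range_iff_summable_log
    (fun n => Real.sqrt_pos.mpr (sub_pos.mpr (ht1 n)))
    (fun n => Real.sqrt_le_one.mpr (sub_le_self _ (ht0 n)))]
  simp only [Real.log_sqrt (sub_pos.mpr (ht1 _)).le]
  rw [summable_div_const_iff two_ne_zero, summable_log_one_sub_iff ht0 ht1,
    summable_sq_sub_one_div_iff]
end
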